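/- Assume M is irreducible with unique invariant distribution π_M. Define Φ(δ) := v_δ(π_M) and Ψ(δ) := Σ_{ℓ∈K} π_M^ℓ · v_δ(e_ℓ), where e_ℓ ∈ Δ(K) is the Dirac belief on state ℓ. If there exists δ₀ ∈ [0,1) with Φ(δ₀) = Ψ(δ₀), then Φ(δ) = Ψ(δ) = Φ(δ₀) for every δ ∈ [δ₀, 1). -/

import Mathlib

open scoped BigOperators

noncomputable section

/-- A row-stochastic matrix: nonnegative entries, rows summing to 1. -/
def IsStochastic {K : Type*} [Fintype K] (M : Matrix K K ℝ) : Prop :=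
  (∀ i j, 0 ≤ M i j) ∧ ∀ i, ∑ j, M i j = 1

/-- A split of `ξ`: a countable family of weights `α` and beliefs `ξs` with
`α s ≥ 0`, `ξs s ∈ Δ(K)`, `∑ α = 1` and `∑ α_s ξ_s = ξ`. -/
def IsSplit {K : Type*} [Fintype K] (ξ : K → ℝ) (α : ℕ → ℝ) (ξs : ℕ → K → ℝ) : Prop :=
  (∀ s, 0 ≤ α s) ∧ (∀ s, ξs s ∈ stdSimplex ℝ K) ∧ (∑' s, α s) = 1 ∧
    ∀ ℓ : K, (∑' s, α s * ξs s ℓ) = ξ ℓ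

/-- The one-stage payoff of a split in the δ-discounted Bellman equation. -/
def splitPayoff {K : Type*} [Fintype K] (M : Matrix K K ℝ) (u : (K → ℝ) → ℝ) (δ : ℝ)
    (w : (K → ℝ) → ℝ) (α : ℕ → ℝ) (ξs : ℕ → K → ℝ) : ℝ :=
  ∑' s, α s * ((1 - δ) * u (ξs s) + δ * w (Matrix.vecMul (ξs s) M))

/-- `v` is the family of δ-discounted values of the Markovian persuasion game:
for each `δ ∈ [0,1)`, `v δ` is bounded between `0` and `C = ‖u‖∞` on `Δ(K)` and
satisfies the Bellman equation there. -/
def IsValueFamily {K : Type*} [Fintype K] (M : Matrix K K ℝ) (u : (K → ℝ) → ℝ) (C : ℝ)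
    (v : ℝ → (K → ℝ) → ℝ) : Prop :=
  ∀ δ ∈ Set.Ico (0 : ℝ) 1,
    (∀ ξ ∈ stdSimplex ℝ K, 0 ≤ v δ ξ ∧ v δ ξ ≤ C) ∧
    ∀ ξ ∈ stdSimplex ℝ K,
      v δ ξ = sSup { r : ℝ | ∃ α ξs, IsSplit ξ α ξs ∧ r = splitPayoff M u δ (v δ) α ξs }

/-!
Write `x_ℓ = v_δ(e_ℓ)`. Gluing near-optimal splits shows that `v_δ` is concave, so
`v_δ(ξ) ≥ ξ ⬝ x` on the simplex. Equality at `π_M`, which has full support by irreducibility,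
then forces `v_{δ₀}` to be affine. Feeding this into the one-point split
`v_{δ₀}(ξ) ≥ (1 - δ₀) u(ξ) + δ₀ v_{δ₀}(ξ M)` shows that `u` lies below its affine interpolation
`ξ ↦ Σ ξ_ℓ u(e_ℓ)`. For such `u` the value is affine at every discount factor: a Bellman step maps
the bound `v_δ(ξ) ≤ ξ ⬝ x + D` to `v_δ(ξ) ≤ ξ ⬝ x + δ D`, and iterating from `D = ‖u‖∞` gives
`D → 0`. Once `v_δ` is affine, its vertex values solve `x = (1 - δ) u(e) + δ M x`, and pairing with
`π_M = π_M M` gives `Φ(δ) = Ψ(δ) = Σ_ℓ π_M^ℓ u(e_ℓ)`, which does not depend on `δ`.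
-/

section

open Matrix Function Set Filter Topology

variable {K : Type*} [Fintype K]

theorem tsum_extend_mul_extend {ι β : Type*} {e : ι → ℕ} (he : Injective e) (a : ι → ℝ)
    (b : ι → β) (b₀ : ℕ → β) (G : β → ℝ) :
    ∑' n, extend e a 0 n * G (extend e b b₀ n) = ∑' i, a i * G (b i) := by
  rw [← tsum_extend_zero he]
  congr 1
  funext n
  by_cases hn : ∃ i, e i = n
  · obtain ⟨i, rfl⟩ := hn
    simp only [he.extend_apply]
  · simp only [extend_apply' _ _ _ hn, Pi.zero_apply, zero_mul]

theorem tsum_prod_eq_sum_tsum {ι β : Type*} [Fintype ι] {f : ι × β → ℝ} (hf : 0 ≤ f)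
    (hs : ∀ i, Summable fun s => f (i, s)) : ∑' p, f p = ∑ i, ∑' s, f (i, s) := by
  rw [Summable.tsum_prod' ((summable_prod_of_nonneg hf).2 ⟨hs, .of_finite⟩) hs, tsum_fintype]

section Split

variable {ξ : K → ℝ} {α : ℕ → ℝ} {ξs : ℕ → K → ℝ}

theorem IsSplit.summable (hs : IsSplit ξ α ξs) : Summable α := by
  by_contra h
  have h1 := hs.2.2.1
  rw [tsum_eq_zero_of_not_summable h] at h1
  exact zero_ne_one h1

theorem IsSplit.summable_mul (hs : IsSplit ξ α ξs) {g : ℕ → ℝ} {c : ℝ}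
    (hg : ∀ s, g s ∈ Icc 0 c) : Summable fun s => α s * g s :=
  (hs.summable.mul_right c).of_nonneg_of_le (fun s => mul_nonneg (hs.1 s) (hg s).1)
    fun s => mul_le_mul_of_nonneg_left (hg s).2 (hs.1 s)

theorem IsSplit.hasSum (hs : IsSplit ξ α ξs) : HasSum α 1 :=
  hs.2.2.1 ▸ hs.summable.hasSum

theorem IsSplit.hasSum_mul_dotProduct (hs : IsSplit ξ α ξs) (z : K → ℝ) :
    HasSum (fun s => α s * (ξs s ⬝ᵥ z)) (ξ ⬝ᵥ z) := by
  have hcomp (ℓ : K) : HasSum (fun s => α s * ξs s ℓ * z ℓ) (ξ ℓ * z ℓ) :=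
    (hs.2.2.2 ℓ ▸ (hs.summable_mul fun s => mem_Icc_of_mem_stdSimplex (hs.2.1 s) ℓ).hasSum).mul_right
      (z ℓ)
  simpa only [dotProduct, Finset.mul_sum, mul_assoc] using hasSum_sum fun ℓ _ => hcomp ℓ

theorem IsSplit.eq_single_of_ne_zero [DecidableEq K] {ℓ : K} (hs : IsSplit (Pi.single ℓ 1) α ξs)
    {s : ℕ} (hαs : α s ≠ 0) : ξs s = Pi.single ℓ 1 := by
  have hoff (m : K) (hm : m ≠ ℓ) : ξs s m = 0 := by
    have hsum : ∑' t, α t * ξs t m = 0 := by rw [hs.2.2.2 m, Pi.single_eq_of_ne hm]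
    have hle : α s * ξs s m ≤ 0 := hsum ▸
      (hs.summable_mul fun t => mem_Icc_of_mem_stdSimplex (hs.2.1 t) m).le_tsum s
        fun t _ => mul_nonneg (hs.1 t) ((hs.2.1 t).1 m)
    exact (mul_eq_zero.1 (le_antisymm hle (mul_nonneg (hs.1 s) ((hs.2.1 s).1 m)))).resolve_left hαs
  have hon : ξs s ℓ = 1 := by
    rw [← (hs.2.1 s).2, Finset.sum_eq_single ℓ (fun m _ hm => hoff m hm) (by simp)]
  funext m
  by_cases hm : m = ℓ
  · subst hm; rw [hon, Pi.single_eq_same]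
  · rw [hoff m hm, Pi.single_eq_of_ne hm]

theorem isSplit_single_zero (hξ : ξ ∈ stdSimplex ℝ K) : IsSplit ξ (Pi.single 0 1) fun _ => ξ :=
  ⟨fun s => by rw [Pi.single_apply]; split_ifs <;> norm_num, fun _ => hξ, tsum_pi_single 0 1,
    fun ℓ => by rw [tsum_mul_right, tsum_pi_single, one_mul]⟩

theorem isSplit_extend {ι : Type*} {e : ι → ℕ} (he : Injective e) (hξ : ξ ∈ stdSimplex ℝ K)
    {a : ι → ℝ} {b : ι → K → ℝ} (ha : ∀ i, 0 ≤ a i) (hb : ∀ i, b i ∈ stdSimplex ℝ K)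
    (ha1 : ∑' i, a i = 1) (hab : ∀ ℓ, ∑' i, a i * b i ℓ = ξ ℓ) :
    IsSplit ξ (extend e a 0) (extend e b fun _ => ξ) := by
  refine ⟨fun n => ?_, fun n => ?_, by rw [tsum_extend_zero he, ha1], fun ℓ => ?_⟩
  · by_cases hn : ∃ i, e i = n
    · obtain ⟨i, rfl⟩ := hn
      exact he.extend_apply a 0 i ▸ ha i
    · exact (extend_apply' a (0 : ℕ → ℝ) n hn).symm ▸ le_rfl
  · by_cases hn : ∃ i, e i = n
    · obtain ⟨i, rfl⟩ := hn
      exact he.extend_apply b _ i ▸ hb i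
    · exact (extend_apply' b _ n hn).symm ▸ hξ
  · exact (tsum_extend_mul_extend he a b _ fun ζ => ζ ℓ).trans (hab ℓ)

end Split

def stagePayoff (M : Matrix K K ℝ) (u : (K → ℝ) → ℝ) (δ : ℝ) (w : (K → ℝ) → ℝ)
    (ζ : K → ℝ) : ℝ :=
  (1 - δ) * u ζ + δ * w (ζ ᵥ* M)

theorem splitPayoff_eq_tsum (M : Matrix K K ℝ) (u : (K → ℝ) → ℝ) (δ : ℝ) (w : (K → ℝ) → ℝ)
    (α : ℕ → ℝ) (ξs : ℕ → K → ℝ) :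
    splitPayoff M u δ w α ξs = ∑' s, α s * stagePayoff M u δ w (ξs s) :=
  rfl

variable [DecidableEq K]

theorem vecMul_mem_stdSimplex {M : Matrix K K ℝ} (hM : M ∈ rowStochastic ℝ K) {ξ : K → ℝ}
    (hξ : ξ ∈ stdSimplex ℝ K) : ξ ᵥ* M ∈ stdSimplex ℝ K := by
  refine ⟨nonneg_vecMul_of_mem_rowStochastic hM hξ.1, ?_⟩
  rw [← dotProduct_one,
    vecMul_dotProduct_one_eq_one_rowStochastic hM (by rw [dotProduct_one, hξ.2])]

theorem row_mem_stdSimplex {M : Matrix K K ℝ} (hM : M ∈ rowStochastic ℝ K) (ℓ : K) :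
    M ℓ ∈ stdSimplex ℝ K :=
  ⟨fun j => hM.1 ℓ j, sum_row_of_mem_rowStochastic hM ℓ⟩

theorem pos_of_vecMul_eq_self {M : Matrix K K ℝ} (hM : M ∈ rowStochastic ℝ K)
    (hirr : ∀ ℓ ℓ' : K, ∃ n : ℕ, 0 < (M ^ n) ℓ ℓ') {π : K → ℝ} (hπ : π ∈ stdSimplex ℝ K)
    (hinv : π ᵥ* M = π) (ℓ : K) : 0 < π ℓ := by
  obtain ⟨ℓ', hℓ'⟩ : ∃ ℓ', 0 < π ℓ' := by
    by_contra! h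
    have hzero : ∑ m, π m = 0 := Finset.sum_eq_zero fun m _ => le_antisymm (h m) (hπ.1 m)
    rw [hπ.2] at hzero
    exact one_ne_zero hzero
  have hpow (n : ℕ) : π ᵥ* M ^ n = π := by
    induction n with
    | zero => rw [pow_zero, vecMul_one]
    | succ n ih => rw [pow_succ, ← vecMul_vecMul, ih, hinv]
  obtain ⟨n, hn⟩ := hirr ℓ' ℓ
  calc 0 < π ℓ' * (M ^ n) ℓ' ℓ := mul_pos hℓ' hn
    _ ≤ ∑ j, π j * (M ^ n) j ℓ :=
      Finset.single_le_sum (fun j _ => mul_nonneg (hπ.1 j) (pow_mem hM n |>.1 j ℓ))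
        (Finset.mem_univ ℓ')
    _ = (π ᵥ* M ^ n) ℓ := rfl
    _ = π ℓ := by rw [hpow]

structure IsDiscountedValue (M : Matrix K K ℝ) (u : (K → ℝ) → ℝ) (C δ : ℝ)
    (w : (K → ℝ) → ℝ) : Prop where
  stochastic : M ∈ rowStochastic ℝ K
  discount_mem : δ ∈ Ico (0 : ℝ) 1
  payoff_mem : ∀ ξ ∈ stdSimplex ℝ K, u ξ ∈ Icc 0 C
  value_mem : ∀ ξ ∈ stdSimplex ℝ K, w ξ ∈ Icc 0 C
  eq_sSup : ∀ ξ ∈ stdSimplex ℝ K,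
    w ξ = sSup {r : ℝ | ∃ α ξs, IsSplit ξ α ξs ∧ r = splitPayoff M u δ w α ξs}

theorem IsValueFamily.isDiscountedValue {M : Matrix K K ℝ} {u : (K → ℝ) → ℝ} {C : ℝ}
    {v : ℝ → (K → ℝ) → ℝ} (hv : IsValueFamily M u C v) (hM : IsStochastic M)
    (hu0 : ∀ ξ ∈ stdSimplex ℝ K, 0 ≤ u ξ) (hC : IsLUB (u '' stdSimplex ℝ K) C) {δ : ℝ}
    (hδ : δ ∈ Ico (0 : ℝ) 1) : IsDiscountedValue M u C δ (v δ) where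
  stochastic := mem_rowStochastic_iff_sum.2 hM
  discount_mem := hδ
  payoff_mem ξ hξ := ⟨hu0 ξ hξ, hC.1 ⟨ξ, hξ, rfl⟩⟩
  value_mem ξ hξ := (hv δ hδ).1 ξ hξ
  eq_sSup := (hv δ hδ).2

def vertexValues (w : (K → ℝ) → ℝ) : K → ℝ := fun ℓ => w (Pi.single ℓ 1)

def IsAffineOnSimplex (w : (K → ℝ) → ℝ) : Prop :=
  ∀ ξ ∈ stdSimplex ℝ K, w ξ = ξ ⬝ᵥ vertexValues w

namespace IsDiscountedValue

variable {M : Matrix K K ℝ} {u : (K → ℝ) → ℝ} {C δ : ℝ} {w : (K → ℝ) → ℝ}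
  (h : IsDiscountedValue M u C δ w) {ξ : K → ℝ} {α : ℕ → ℝ} {ξs : ℕ → K → ℝ}
include h

theorem stagePayoff_mem {ζ : K → ℝ} (hζ : ζ ∈ stdSimplex ℝ K) :
    stagePayoff M u δ w ζ ∈ Icc 0 C := by
  obtain ⟨hδ0, hδ1⟩ := h.discount_mem
  obtain ⟨hu0, huC⟩ := h.payoff_mem ζ hζ
  obtain ⟨hw0, hwC⟩ := h.value_mem _ (vecMul_mem_stdSimplex h.stochastic hζ)
  constructor <;> unfold stagePayoff <;> nlinarith

theorem summable_splitPayoff (hs : IsSplit ξ α ξs) :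
    Summable fun s => α s * stagePayoff M u δ w (ξs s) :=
  hs.summable_mul fun s => h.stagePayoff_mem (hs.2.1 s)

theorem splitPayoff_le (hs : IsSplit ξ α ξs) : splitPayoff M u δ w α ξs ≤ C := by
  rw [splitPayoff_eq_tsum]
  simpa using hasSum_le
    (fun s => mul_le_mul_of_nonneg_left (h.stagePayoff_mem (hs.2.1 s)).2 (hs.1 s))
    (h.summable_splitPayoff hs).hasSum (hs.hasSum.mul_right C)

theorem splitPayoff_le_value (hξ : ξ ∈ stdSimplex ℝ K) (hs : IsSplit ξ α ξs) :
    splitPayoff M u δ w α ξs ≤ w ξ :=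
  h.eq_sSup ξ hξ ▸ le_csSup ⟨C, by rintro r ⟨α', ξs', hs', rfl⟩; exact h.splitPayoff_le hs'⟩
    ⟨α, ξs, hs, rfl⟩

theorem value_le_of_forall (hξ : ξ ∈ stdSimplex ℝ K) {c : ℝ}
    (hc : ∀ α ξs, IsSplit ξ α ξs → splitPayoff M u δ w α ξs ≤ c) : w ξ ≤ c :=
  h.eq_sSup ξ hξ ▸ csSup_le ⟨_, _, _, isSplit_single_zero hξ, rfl⟩
    (by rintro r ⟨α', ξs', hs', rfl⟩; exact hc α' ξs' hs')

theorem exists_lt_splitPayoff_add (hξ : ξ ∈ stdSimplex ℝ K) {ε : ℝ} (hε : 0 < ε) :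
    ∃ α ξs, IsSplit ξ α ξs ∧ w ξ < splitPayoff M u δ w α ξs + ε := by
  by_contra! hlt
  have := h.value_le_of_forall hξ fun α ξs hs => le_sub_iff_add_le.2 (hlt α ξs hs)
  linarith

theorem stagePayoff_le_value (hξ : ξ ∈ stdSimplex ℝ K) : stagePayoff M u δ w ξ ≤ w ξ := by
  have := h.splitPayoff_le_value hξ (isSplit_single_zero hξ)
  rwa [splitPayoff_eq_tsum, tsum_mul_right, tsum_pi_single, one_mul] at this

theorem value_le_dotProduct_add {z : K → ℝ} {c : ℝ}
    (hz : ∀ ζ ∈ stdSimplex ℝ K, stagePayoff M u δ w ζ ≤ ζ ⬝ᵥ z + c) {ξ : K → ℝ}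
    (hξ : ξ ∈ stdSimplex ℝ K) : w ξ ≤ ξ ⬝ᵥ z + c :=
  h.value_le_of_forall hξ fun _ _ hs => hasSum_le (fun s => mul_le_mul_of_nonneg_left
      (hz _ (hs.2.1 s)) (hs.1 s)) (h.summable_splitPayoff hs).hasSum
    (by simpa only [mul_add, one_mul] using
      (hs.hasSum_mul_dotProduct z).add (hs.hasSum.mul_right c))

theorem vertexValues_eq (ℓ : K) :
    vertexValues w ℓ = (1 - δ) * vertexValues u ℓ + δ * w (M ℓ) := by
  have hstage : stagePayoff M u δ w (Pi.single ℓ 1) = (1 - δ) * vertexValues u ℓ + δ * w (M ℓ) := by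
    rw [stagePayoff, Matrix.single_one_vecMul]
    rfl
  rw [← hstage]
  refine le_antisymm (h.value_le_of_forall (single_mem_stdSimplex ℝ ℓ) fun α ξs hs => ?_)
    (h.stagePayoff_le_value (single_mem_stdSimplex ℝ ℓ))
  have hconst (s : ℕ) : α s * stagePayoff M u δ w (ξs s)
      = α s * stagePayoff M u δ w (Pi.single ℓ 1) := by
    rcases eq_or_ne (α s) 0 with hα | hα
    · rw [hα, zero_mul, zero_mul]
    · rw [hs.eq_single_of_ne_zero hα]
  rw [splitPayoff_eq_tsum, tsum_congr hconst, tsum_mul_right, hs.2.2.1, one_mul]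

theorem sum_mul_le_value_sum {ι : Type*} [Fintype ι] {a : ι → ℝ} {b : ι → K → ℝ}
    (ha : ∀ i, 0 ≤ a i) (ha1 : ∑ i, a i = 1) (hb : ∀ i, b i ∈ stdSimplex ℝ K) :
    ∑ i, a i * w (b i) ≤ w (∑ i, a i • b i) := by
  have hξ : ∑ i, a i • b i ∈ stdSimplex ℝ K :=
    (convex_stdSimplex ℝ K).sum_mem (fun i _ => ha i) ha1 fun i _ => hb i
  refine le_of_forall_pos_le_add fun ε hε => ?_
  choose α ξs hs hlt using fun i => h.exists_lt_splitPayoff_add (hb i) hε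
  obtain ⟨e, he⟩ := Countable.exists_injective_nat (ι × ℕ)
  -- the `ε`-optimal splits of the `b i`, weighted by `a i`, glue to a split of the barycentre
  have hmix {G : (K → ℝ) → ℝ} {c : ℝ} (hG : ∀ ζ ∈ stdSimplex ℝ K, G ζ ∈ Icc 0 c) :
      ∑' p : ι × ℕ, a p.1 * α p.1 p.2 * G (ξs p.1 p.2)
        = ∑ i, a i * ∑' s, α i s * G (ξs i s) := by
    have hsum (i : ι) : Summable fun s => a i * α i s * G (ξs i s) := by
      simpa only [mul_assoc] using
        ((hs i).summable_mul fun s => hG _ ((hs i).2.1 s)).mul_left (a i)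
    rw [tsum_prod_eq_sum_tsum (f := fun p : ι × ℕ => a p.1 * α p.1 p.2 * G (ξs p.1 p.2))
      (fun p => mul_nonneg (mul_nonneg (ha _) ((hs _).1 _)) (hG _ ((hs _).2.1 _)).1) hsum]
    simp only [mul_assoc, tsum_mul_left]
  have hweight : ∑' p : ι × ℕ, a p.1 * α p.1 p.2 = 1 := by
    simpa [(hs _).2.2.1, ha1] using
      hmix (G := fun _ => 1) (c := 1) fun _ _ => ⟨zero_le_one, le_rfl⟩
  have hbary (ℓ : K) : ∑' p : ι × ℕ, a p.1 * α p.1 p.2 * ξs p.1 p.2 ℓ = (∑ i, a i • b i) ℓ := by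
    simpa [(hs _).2.2.2, Finset.sum_apply] using
      hmix (G := fun ζ => ζ ℓ) (c := 1) fun ζ hζ => mem_Icc_of_mem_stdSimplex hζ ℓ
  have hsplit := isSplit_extend he hξ (a := fun p => a p.1 * α p.1 p.2)
    (b := fun p => ξs p.1 p.2) (fun p => mul_nonneg (ha _) ((hs _).1 _)) (fun p => (hs _).2.1 _)
    hweight hbary
  have hpay := h.splitPayoff_le_value hξ hsplit
  rw [splitPayoff_eq_tsum, tsum_extend_mul_extend he, hmix fun ζ hζ => h.stagePayoff_mem hζ] at hpay
  calc ∑ i, a i * w (b i) ≤ ∑ i, a i * (splitPayoff M u δ w (α i) (ξs i) + ε) :=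
        Finset.sum_le_sum fun i _ => mul_le_mul_of_nonneg_left (hlt i).le (ha i)
    _ = ∑ i, a i * splitPayoff M u δ w (α i) (ξs i) + ε := by
        simp only [mul_add, Finset.sum_add_distrib, ← Finset.sum_mul, ha1, one_mul]
    _ ≤ w (∑ i, a i • b i) + ε := add_le_add_left hpay ε

theorem dotProduct_vertexValues_le {ξ : K → ℝ} (hξ : ξ ∈ stdSimplex ℝ K) :
    ξ ⬝ᵥ vertexValues w ≤ w ξ := by
  have hsum : ∑ ℓ, ξ ℓ • Pi.single ℓ (1 : ℝ) = ξ := by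
    ext m
    simp [Finset.sum_apply, Pi.single_apply]
  simpa [hsum, dotProduct, vertexValues] using
    h.sum_mul_le_value_sum hξ.1 hξ.2 fun ℓ => single_mem_stdSimplex ℝ ℓ

theorem dotProduct_vertexValues_of_affine (haff : IsAffineOnSimplex w) (ξ : K → ℝ) :
    ξ ⬝ᵥ vertexValues w = (1 - δ) * (ξ ⬝ᵥ vertexValues u) + δ * (ξ ᵥ* M ⬝ᵥ vertexValues w) := by
  have hvert : vertexValues w = (1 - δ) • vertexValues u + δ • (M *ᵥ vertexValues w) := by
    funext ℓ
    rw [h.vertexValues_eq, haff _ (row_mem_stdSimplex h.stochastic ℓ)]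
    rfl
  conv_lhs => rw [hvert]
  rw [dotProduct_add, dotProduct_smul, dotProduct_smul, dotProduct_mulVec, smul_eq_mul,
    smul_eq_mul]

theorem le_dotProduct_vertexValues_of_affine (haff : IsAffineOnSimplex w) {ξ : K → ℝ}
    (hξ : ξ ∈ stdSimplex ℝ K) : u ξ ≤ ξ ⬝ᵥ vertexValues u := by
  have hstage := h.stagePayoff_le_value hξ
  rw [stagePayoff, haff ξ hξ, haff _ (vecMul_mem_stdSimplex h.stochastic hξ),
    h.dotProduct_vertexValues_of_affine haff ξ] at hstage
  exact le_of_mul_le_mul_left (by linarith) (sub_pos.2 h.discount_mem.2)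

theorem dotProduct_vertexValues_eq_of_affine (haff : IsAffineOnSimplex w) {π : K → ℝ}
    (hinv : π ᵥ* M = π) : π ⬝ᵥ vertexValues w = π ⬝ᵥ vertexValues u := by
  have hπ := h.dotProduct_vertexValues_of_affine haff π
  rw [hinv] at hπ
  exact mul_left_cancel₀ (sub_pos.2 h.discount_mem.2).ne' (by linarith)

theorem affine_of_eq_of_pos {π : K → ℝ} (hπ : π ∈ stdSimplex ℝ K) (hpos : ∀ ℓ, 0 < π ℓ)
    (heq : w π = π ⬝ᵥ vertexValues w) : IsAffineOnSimplex w := by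
  intro ξ hξ
  refine le_antisymm ?_ (h.dotProduct_vertexValues_le hξ)
  have : Nonempty K := by
    obtain ⟨ℓ, -, -⟩ := Finset.exists_ne_zero_of_sum_ne_zero (hπ.2 ▸ one_ne_zero)
    exact ⟨ℓ⟩
  obtain ⟨ℓ₀, hmin⟩ := Finite.exists_min π
  set t := π ℓ₀
  have hrest (ℓ : K) : 0 ≤ π ℓ - t * ξ ℓ := by
    nlinarith [hmin ℓ, hpos ℓ₀, (mem_Icc_of_mem_stdSimplex hξ ℓ).2]
  -- `π` is the mixture of `ξ` with weight `t` and of the vertices with the remaining mass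
  let a : Option K → ℝ := fun o => o.elim t fun ℓ => π ℓ - t * ξ ℓ
  let b : Option K → K → ℝ := fun o => o.elim ξ fun ℓ => Pi.single ℓ 1
  have hbary : ∑ o, a o • b o = π := by
    ext m
    simp [a, b, Fintype.sum_option, Finset.sum_apply, Pi.single_apply]
  have hconc := h.sum_mul_le_value_sum (a := a) (b := b) (fun o => o.rec (hpos ℓ₀).le hrest)
    (by simp [a, Fintype.sum_option, Finset.sum_sub_distrib, ← Finset.mul_sum, hπ.2, hξ.2])
    (fun o => o.rec hξ fun ℓ => single_mem_stdSimplex ℝ ℓ)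
  rw [hbary, heq] at hconc
  simp only [a, b, Fintype.sum_option, Option.elim] at hconc
  have hvert : ∑ ℓ, (π ℓ - t * ξ ℓ) * w (Pi.single ℓ 1)
      = π ⬝ᵥ vertexValues w - t * (ξ ⬝ᵥ vertexValues w) := by
    simp only [dotProduct, vertexValues, sub_mul, Finset.sum_sub_distrib, Finset.mul_sum, mul_assoc]
  rw [hvert] at hconc
  exact le_of_mul_le_mul_left (by linarith) (hpos ℓ₀)

theorem le_dotProduct_vertexValues_add_mul (hu : ∀ ξ ∈ stdSimplex ℝ K, u ξ ≤ ξ ⬝ᵥ vertexValues u)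
    {D : ℝ} (hD : ∀ ζ ∈ stdSimplex ℝ K, w ζ ≤ ζ ⬝ᵥ vertexValues w + D) {ξ : K → ℝ}
    (hξ : ξ ∈ stdSimplex ℝ K) : w ξ ≤ ξ ⬝ᵥ vertexValues w + δ * D := by
  obtain ⟨hδ0, hδ1⟩ := h.discount_mem
  set z := (1 - δ) • vertexValues u + δ • (M *ᵥ vertexValues w)
  have hstage (ζ : K → ℝ) (hζ : ζ ∈ stdSimplex ℝ K) :
      stagePayoff M u δ w ζ ≤ ζ ⬝ᵥ z + δ * D := by
    have hu' := mul_le_mul_of_nonneg_left (hu ζ hζ) (sub_nonneg.2 hδ1.le)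
    have hD' := mul_le_mul_of_nonneg_left (hD _ (vecMul_mem_stdSimplex h.stochastic hζ)) hδ0
    simp only [stagePayoff, z, dotProduct_add, dotProduct_smul, dotProduct_mulVec, smul_eq_mul]
    linarith
  have hzx : z ≤ vertexValues w := fun ℓ => by
    have hrow := mul_le_mul_of_nonneg_left
      (h.dotProduct_vertexValues_le (row_mem_stdSimplex h.stochastic ℓ)) hδ0
    rw [h.vertexValues_eq ℓ]
    exact add_le_add_right hrow _
  linarith [h.value_le_dotProduct_add hstage hξ, dotProduct_le_dotProduct_of_nonneg_left hzx hξ.1]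

theorem affine_of_le_dotProduct_vertexValues
    (hu : ∀ ξ ∈ stdSimplex ℝ K, u ξ ≤ ξ ⬝ᵥ vertexValues u) : IsAffineOnSimplex w := by
  intro ξ hξ
  refine le_antisymm ?_ (h.dotProduct_vertexValues_le hξ)
  have hiter (n : ℕ) : ∀ ζ ∈ stdSimplex ℝ K, w ζ ≤ ζ ⬝ᵥ vertexValues w + δ ^ n * C := by
    induction n with
    | zero =>
      intro ζ hζ
      have hx : 0 ≤ vertexValues w := fun ℓ => (h.value_mem _ (single_mem_stdSimplex ℝ ℓ)).1
      have := dotProduct_nonneg_of_nonneg hζ.1 hx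
      linarith [(h.value_mem ζ hζ).2, pow_zero δ]
    | succ n ih =>
      intro ζ hζ
      rw [pow_succ', mul_assoc]
      exact h.le_dotProduct_vertexValues_add_mul hu ih hζ
  have hlim : Tendsto (fun n => ξ ⬝ᵥ vertexValues w + δ ^ n * C) atTop
      (𝓝 (ξ ⬝ᵥ vertexValues w)) := by
    simpa using ((tendsto_pow_atTop_nhds_zero_of_lt_one h.discount_mem.1
      h.discount_mem.2).mul_const C).const_add (ξ ⬝ᵥ vertexValues w)
  exact ge_of_tendsto' hlim fun n => hiter n ξ hξ

end IsDiscountedValue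

end

theorem markovian_persuasion_Phi_eq_Psi_propagates_general
    {K : Type*} [Fintype K] [DecidableEq K]
    (M : Matrix K K ℝ) (hM : IsStochastic M)
    (hirr : ∀ ℓ ℓ' : K, ∃ n : ℕ, 1 ≤ n ∧ 0 < (M ^ n) ℓ ℓ')
    (u : (K → ℝ) → ℝ) (hu0 : ∀ ξ ∈ stdSimplex ℝ K, 0 ≤ u ξ)
    (C : ℝ) (hC : IsLUB (u '' stdSimplex ℝ K) C)
    (v : ℝ → (K → ℝ) → ℝ) (hv : IsValueFamily M u C v)
    (πM : K → ℝ) (hπ : πM ∈ stdSimplex ℝ K) (hπinv : Matrix.vecMul πM M = πM)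
    (Φ Ψ : ℝ → ℝ)
    (hΦ : ∀ δ, Φ δ = v δ πM)
    (hΨ : ∀ δ, Ψ δ = ∑ ℓ, πM ℓ * v δ (fun m => if m = ℓ then (1 : ℝ) else 0)) :
    ∀ δ₀ : ℝ, 0 ≤ δ₀ → δ₀ < 1 → Φ δ₀ = Ψ δ₀ →
      ∀ δ : ℝ, δ₀ ≤ δ → δ < 1 → Φ δ = Φ δ₀ ∧ Ψ δ = Φ δ₀ := by
  intro δ₀ hδ₀ hδ₀1 hΦΨ δ hδ₀δ hδ1
  have h₀ := hv.isDiscountedValue hM hu0 hC ⟨hδ₀, hδ₀1⟩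
  have h := hv.isDiscountedValue hM hu0 hC ⟨hδ₀.trans hδ₀δ, hδ1⟩
  have hΨ' (d : ℝ) : Ψ d = πM ⬝ᵥ vertexValues (v d) := by
    simp only [hΨ, ← Pi.single_apply]
    rfl
  have hpos := pos_of_vecMul_eq_self h₀.stochastic
    (fun ℓ ℓ' => (hirr ℓ ℓ').imp fun _ => And.right) hπ hπinv
  have haff₀ := h₀.affine_of_eq_of_pos hπ hpos (by rw [← hΦ, hΦΨ, hΨ'])
  have haff := h.affine_of_le_dotProduct_vertexValues fun ξ hξ =>
    h₀.le_dotProduct_vertexValues_of_affine haff₀ hξ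
  have hΦ₀ : Φ δ₀ = πM ⬝ᵥ vertexValues u := by
    rw [hΦ, haff₀ πM hπ, h₀.dotProduct_vertexValues_eq_of_affine haff₀ hπinv]
  rw [hΦ₀, hΦ, hΨ', haff πM hπ, h.dotProduct_vertexValues_eq_of_affine haff hπinv]
  exact ⟨rfl, rfl⟩

theorem markovian_persuasion_Phi_eq_Psi_propagates
    {K : Type*} [Fintype K] [Nonempty K] [DecidableEq K]
    (M : Matrix K K ℝ) (hM : IsStochastic M)
    (hirr : ∀ ℓ ℓ' : K, ∃ n : ℕ, 1 ≤ n ∧ 0 < (M ^ n) ℓ ℓ')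
    (u : (K → ℝ) → ℝ) (hu0 : ∀ ξ ∈ stdSimplex ℝ K, 0 ≤ u ξ)
    (husc : UpperSemicontinuousOn u (stdSimplex ℝ K))
    (C : ℝ) (hC : IsLUB (u '' stdSimplex ℝ K) C)
    (v : ℝ → (K → ℝ) → ℝ) (hv : IsValueFamily M u C v)
    (πM : K → ℝ) (hπ : πM ∈ stdSimplex ℝ K) (hπinv : Matrix.vecMul πM M = πM)
    (hπuniq : ∀ π' ∈ stdSimplex ℝ K, Matrix.vecMul π' M = π' → π' = πM)
    (Φ Ψ : ℝ → ℝ)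
    (hΦ : ∀ δ, Φ δ = v δ πM)
    (hΨ : ∀ δ, Ψ δ = ∑ ℓ, πM ℓ * v δ (fun m => if m = ℓ then (1 : ℝ) else 0)) :
    ∀ δ₀ : ℝ, 0 ≤ δ₀ → δ₀ < 1 → Φ δ₀ = Ψ δ₀ →
      ∀ δ : ℝ, δ₀ ≤ δ → δ < 1 → Φ δ = Φ δ₀ ∧ Ψ δ = Φ δ₀ :=
  markovian_persuasion_Phi_eq_Psi_propagates_general M hM hirr u hu0 C hC v hv πM hπ hπinv Φ Ψ hΦ hΨ
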